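/- arXiv:2202.13888 — 2 statements merged into one kernel-verified Lean document; each statement's English description precedes it below -/
import Mathlib

section
/- The inverted Lagrangian leapfrog integrator is self-adjoint: let (q̃, ṽ) = Ψ_ε(q, v) be the result of one inverted Lagrangian leapfrog step of size ε from (q, v), computed via intermediate position q̆, and assume the matrices Id + 2Ω(ε,q̆,v) and Id − 2Ω(ε,q̆,ṽ) are invertible. Then one inverted Lagrangian leapfrog step of size −ε from (q̃, ṽ) returns exactly (q, v); that is, Ψ_{−ε}(Ψ_ε(q,v)) = (q,v). -/
open Matrix

/-- The Christoffel symbols `Γ^k_{ij}(q)` of the metric `G`. -/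
noncomputable def christoffel (m : ℕ) (G : (Fin m → ℝ) → Matrix (Fin m) (Fin m) ℝ)
    (k i j : Fin m) (q : Fin m → ℝ) : ℝ :=
  (1 / 2) * ∑ l, (G q)⁻¹ k l *
    (fderiv ℝ (fun x => G x l j) q (Pi.single i 1)
      + fderiv ℝ (fun x => G x l i) q (Pi.single j 1)
      - fderiv ℝ (fun x => G x i j) q (Pi.single l 1))

/-- The matrix `Ω(ε, q, v)` with entries `Ω_{ij} = (ε/2) Σ_k Γ^i_{kj}(q) v^{(k)}`. -/
noncomputable def Omega (m : ℕ) (G : (Fin m → ℝ) → Matrix (Fin m) (Fin m) ℝ)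
    (ε : ℝ) (q v : Fin m → ℝ) : Matrix (Fin m) (Fin m) ℝ :=
  Matrix.of fun i j => (ε / 2) * ∑ k, christoffel m G i k j q * v k


/-- The coordinate gradient `∇U(q)`, with `(∇U(q))_l = ∂U/∂q^{(l)}(q)`. -/
noncomputable def gradU (m : ℕ) (U : (Fin m → ℝ) → ℝ) (q : Fin m → ℝ) : Fin m → ℝ :=
  fun l => fderiv ℝ U q (Pi.single l 1)

/-- One step of the inverted Lagrangian leapfrog integrator with step-size `ε`. -/
noncomputable def invertedLagrangianLeapfrog (m : ℕ)
    (G : (Fin m → ℝ) → Matrix (Fin m) (Fin m) ℝ) (U : (Fin m → ℝ) → ℝ)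
    (ε : ℝ) (x : (Fin m → ℝ) × (Fin m → ℝ)) : (Fin m → ℝ) × (Fin m → ℝ) :=
  let q := x.1
  let v := x.2
  let qb := q + (ε / 2) • v
  let vt := ((1 : Matrix (Fin m) (Fin m) ℝ) + 2 • Omega m G ε qb v)⁻¹ *ᵥ
    (v - ε • ((G qb)⁻¹ *ᵥ gradU m U qb))
  let qt := qb + (ε / 2) • vt
  (qt, vt)

lemma christoffel_symm (m : ℕ) (G : (Fin m → ℝ) → Matrix (Fin m) (Fin m) ℝ)
    (hGsym : ∀ x (i j : Fin m), G x i j = G x j i)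
    (i j k : Fin m) (q : Fin m → ℝ) :
    christoffel m G i j k q = christoffel m G i k j q := by
  unfold christoffel
  congr 1
  apply Finset.sum_congr rfl
  intro l _
  have h1 : (fun x => G x j k) = (fun x => G x k j) := funext fun x => hGsym x j k
  rw [h1]
  ring

lemma omega_mulVec_symm (m : ℕ) (G : (Fin m → ℝ) → Matrix (Fin m) (Fin m) ℝ)
    (hGsym : ∀ x (i j : Fin m), G x i j = G x j i)
    (ε : ℝ) (q a b : Fin m → ℝ) :
    Omega m G ε q a *ᵥ b = Omega m G ε q b *ᵥ a := by
  funext i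
  simp only [Matrix.mulVec, dotProduct, Omega, Matrix.of_apply]
  have key : ∀ (c d : Fin m → ℝ),
      ∑ x, (ε / 2 * ∑ k, christoffel m G i k x q * c k) * d x
        = ∑ x, ∑ k, ε / 2 * christoffel m G i k x q * c k * d x := by
    intro c d
    refine Finset.sum_congr rfl fun x _ => ?_
    rw [Finset.mul_sum, Finset.sum_mul]
    exact Finset.sum_congr rfl fun k _ => by ring
  rw [key, key, Finset.sum_comm]
  refine Finset.sum_congr rfl fun j _ => Finset.sum_congr rfl fun k _ => ?_
  rw [christoffel_symm m G hGsym i j k]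
  ring

lemma omega_neg (m : ℕ) (G : (Fin m → ℝ) → Matrix (Fin m) (Fin m) ℝ)
    (ε : ℝ) (q v : Fin m → ℝ) :
    Omega m G (-ε) q v = - Omega m G ε q v := by
  ext i j
  simp only [Omega, Matrix.of_apply, Matrix.neg_apply]
  ring

/-- the inverted Lagrangian leapfrog integrator is self-adjoint:
`Ψ_{−ε}(Ψ_ε(q,v)) = (q,v)` whenever the two relevant matrices are invertible. -/
theorem invertedLagrangianLeapfrog_self_adjoint
    (m : ℕ) (hm : 1 ≤ m)
    (G : (Fin m → ℝ) → Matrix (Fin m) (Fin m) ℝ)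
    (hGsmooth : ∀ i j, ContDiff ℝ (⊤ : ℕ∞) fun q => G q i j)
    (hGpd : ∀ q, (G q).PosDef)
    (U : (Fin m → ℝ) → ℝ) (hU : ContDiff ℝ (⊤ : ℕ∞) U)
    (ε : ℝ) (q v qb vt qt : Fin m → ℝ)
    (hqb : qb = q + (ε / 2) • v)
    (hvt : vt = ((1 : Matrix (Fin m) (Fin m) ℝ) + 2 • Omega m G ε qb v)⁻¹ *ᵥ
      (v - ε • ((G qb)⁻¹ *ᵥ gradU m U qb)))
    (hqt : qt = qb + (ε / 2) • vt)
    (h1 : IsUnit ((1 : Matrix (Fin m) (Fin m) ℝ) + 2 • Omega m G ε qb v).det)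
    (h2 : IsUnit ((1 : Matrix (Fin m) (Fin m) ℝ) - 2 • Omega m G ε qb vt).det) :
    invertedLagrangianLeapfrog m G U (-ε) (qt, vt) = (q, v) := by
  have hGsym : ∀ x (i j : Fin m), G x i j = G x j i := by
    intro x i j
    simpa using (hGpd x).isHermitian.apply j i
  set A := (1 : Matrix (Fin m) (Fin m) ℝ) + 2 • Omega m G ε qb v with hA
  set B := (1 : Matrix (Fin m) (Fin m) ℝ) - 2 • Omega m G ε qb vt with hB
  set g := (G qb)⁻¹ *ᵥ gradU m U qb with hg
  -- intermediate position of the backward step equals qb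
  have hqb' : qt + (-ε / 2) • vt = qb := by
    rw [hqt]; module
  -- A *ᵥ vt = v - ε • g
  have hAvt : A *ᵥ vt = v - ε • g := by
    rw [hvt, Matrix.mulVec_mulVec, Matrix.mul_nonsing_inv _ h1, Matrix.one_mulVec]
  -- key identity: B *ᵥ v = vt + ε • g
  have hBv : B *ᵥ v = vt + ε • g := by
    have hsymm : Omega m G ε qb vt *ᵥ v = Omega m G ε qb v *ᵥ vt :=
      omega_mulVec_symm m G hGsym ε qb vt v
    have h2s : (2 • Omega m G ε qb v) *ᵥ vt = v - ε • g - vt := by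
      have : A *ᵥ vt = vt + (2 • Omega m G ε qb v) *ᵥ vt := by
        rw [hA, Matrix.add_mulVec, Matrix.one_mulVec]
      rw [this] at hAvt
      linear_combination (norm := module) hAvt
    rw [hB, Matrix.sub_mulVec, Matrix.one_mulVec]
    have h2v : (2 • Omega m G ε qb vt) *ᵥ v = (2 • Omega m G ε qb v) *ᵥ vt := by
      rw [two_smul, two_smul, Matrix.add_mulVec, Matrix.add_mulVec, hsymm]
    rw [h2v, h2s]
    module
  -- now compute the backward step
  unfold invertedLagrangianLeapfrog
  simp only [hqb']
  have hOm : (1 : Matrix (Fin m) (Fin m) ℝ) + 2 • Omega m G (-ε) qb vt = B := by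
    rw [omega_neg, hB]
    module
  have hrhs : vt - (-ε) • g = vt + ε • g := by module
  rw [hOm, hrhs, ← hBv, Matrix.mulVec_mulVec, Matrix.nonsing_inv_mul _ h2,
    Matrix.one_mulVec]
  refine Prod.ext ?_ rfl
  rw [hqb]; module
end

section
/- The inverted Lagrangian leapfrog integrator has at least first-order accuracy (second-order local error): let (q_t, v_t) be the solution of the Lagrangian equations of motion with initial condition (q_0, v_0), and let Ψ_ε denote one inverted Lagrangian leapfrog step of size ε. Then ‖Ψ_ε(q_0, v_0) − (q_ε, v_ε)‖ = O(ε²) as ε → 0. -/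
open Matrix

section helpers
variable {E : Type*} [NormedAddCommGroup E] [NormedSpace ℝ E] {m : ℕ} {x : E}

theorem contDiffAt_matrix_det' {f : E → Matrix (Fin m) (Fin m) ℝ}
    (hf : ∀ i j, ContDiffAt ℝ (⊤ : ℕ∞) (fun y => f y i j) x) :
    ContDiffAt ℝ (⊤ : ℕ∞) (fun y => (f y).det) x := by
  have h : (fun y => (f y).det)
      = fun y => ∑ σ : Equiv.Perm (Fin m),
        ((Equiv.Perm.sign σ : ℤ) : ℝ) * ∏ i, f y (σ i) i := by
    funext y
    rw [Matrix.det_apply]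
    simp [Units.smul_def, zsmul_eq_mul]
  rw [h]
  exact ContDiffAt.sum fun σ _ =>
    contDiffAt_const.mul (contDiffAt_prod fun i _ => hf (σ i) i)

theorem contDiffAt_matrix_inv_entry' {f : E → Matrix (Fin m) (Fin m) ℝ}
    (hf : ∀ i j, ContDiffAt ℝ (⊤ : ℕ∞) (fun y => f y i j) x) (hdet : (f x).det ≠ 0) (k l : Fin m) :
    ContDiffAt ℝ (⊤ : ℕ∞) (fun y => (f y)⁻¹ k l) x := by
  have hadj : ContDiffAt ℝ (⊤ : ℕ∞) (fun y => (f y).adjugate k l) x := by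
    have h : (fun y => (f y).adjugate k l)
        = fun y => ((f y).updateRow l (Pi.single k 1)).det := by
      funext y; rw [Matrix.adjugate_apply]
    rw [h]
    apply contDiffAt_matrix_det'
    intro i j
    by_cases hil : i = l
    · simpa [Matrix.updateRow_apply, hil] using
        (contDiffAt_const : ContDiffAt ℝ (⊤ : ℕ∞) (fun _ : E => (Pi.single k 1 : Fin m → ℝ) j) x)
    · simpa [Matrix.updateRow_apply, hil] using hf i j
  have h : (fun y => (f y)⁻¹ k l) = fun y => ((f y).det)⁻¹ * (f y).adjugate k l := by
    funext y
    rw [Matrix.inv_def]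
    simp [Matrix.smul_apply, Ring.inverse_eq_inv', smul_eq_mul]
  rw [h]
  exact ((contDiffAt_matrix_det' hf).inv hdet).mul hadj

end helpers

theorem contDiffAt_christoffel' {m : ℕ} {G : (Fin m → ℝ) → Matrix (Fin m) (Fin m) ℝ}
    (hG : ∀ i j, ContDiff ℝ (⊤ : ℕ∞) fun q => G q i j) (hGpd : ∀ q, (G q).PosDef)
    (k i j : Fin m) (x : Fin m → ℝ) :
    ContDiffAt ℝ (⊤ : ℕ∞) (fun p => christoffel m G k i j p) x := by
  unfold christoffel
  refine contDiffAt_const.mul (ContDiffAt.sum fun l _ => ContDiffAt.mul ?_ ?_)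
  · exact contDiffAt_matrix_inv_entry' (fun a b => (hG a b).contDiffAt)
      ((hGpd x).det_pos.ne') k l
  · have hD : ∀ a b c : Fin m,
        ContDiffAt ℝ (⊤ : ℕ∞) (fun p => fderiv ℝ (fun z => G z a b) p (Pi.single c 1)) x :=
      fun a b c => (((hG a b).fderiv_right (by simp)).clm_apply contDiff_const).contDiffAt
    exact ((hD l j i).add (hD l i j)).sub (hD i j l)

open Asymptotics Filter

theorem isBigO_sq_of_contDiffAt {E : Type*} [NormedAddCommGroup E] [NormedSpace ℝ E]
    {g : ℝ → E} (hg : ContDiffAt ℝ (⊤ : ℕ∞) g 0) (h0 : g 0 = 0) (h1 : deriv g 0 = 0) :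
    g =O[nhds 0] fun ε : ℝ => ε ^ 2 := by
  obtain ⟨u, hu, hgu⟩ := hg.contDiffOn (m := 2) (WithTop.coe_le_coe.2 (le_top : (2:ℕ∞) ≤ ⊤)) (by intro h; cases h)
  obtain ⟨ρ, hρ, hball⟩ := Metric.mem_nhds_iff.1 hu
  have hgo : ContDiffOn ℝ 2 g (Metric.ball 0 ρ) := hgu.mono hball
  have hderiv : ContDiffOn ℝ 1 (deriv g) (Metric.ball 0 ρ) :=
    hgo.deriv_of_isOpen Metric.isOpen_ball (by norm_num)
  have hdiffg : ∀ t ∈ Metric.ball (0:ℝ) ρ, DifferentiableAt ℝ g t := fun t ht =>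
    ((hgo t ht).differentiableWithinAt (by simp)).differentiableAt
      (Metric.isOpen_ball.mem_nhds ht)
  have hdd : DifferentiableAt ℝ (deriv g) 0 :=
    ((hderiv 0 (Metric.mem_ball_self hρ)).differentiableWithinAt (by simp)).differentiableAt
      (Metric.isOpen_ball.mem_nhds (Metric.mem_ball_self hρ))
  have hO : (deriv g) =O[nhds (0:ℝ)] fun t => t := by
    have := hdd.hasFDerivAt.isBigO_sub
    simpa [h1] using this
  obtain ⟨C, hCpos, hC⟩ := hO.exists_pos
  rw [IsBigOWith] at hC
  obtain ⟨r₀, hr₀, hr⟩ := Metric.eventually_nhds_iff.1 hC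
  set r := min r₀ ρ with hrdef
  have hrpos : 0 < r := lt_min hr₀ hρ
  rw [isBigO_iff]
  refine ⟨C, Metric.eventually_nhds_iff.2 ⟨r, hrpos, fun {ε} hε => ?_⟩⟩
  have hεr : |ε| < r := by simpa [Real.dist_eq] using hε
  have hsub : Set.uIcc (0:ℝ) ε ⊆ Metric.ball (0:ℝ) r := by
    intro t ht
    rw [Set.mem_uIcc] at ht
    have habs : |t| ≤ |ε| := by
      rcases ht with ⟨h1', h2'⟩ | ⟨h1', h2'⟩
      · rw [abs_of_nonneg h1']; exact h2'.trans (le_abs_self ε)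
      · rw [abs_of_nonpos h2']
        have := neg_abs_le ε
        linarith
    simpa [Real.dist_eq] using lt_of_le_of_lt habs hεr
  have hballs : Metric.ball (0:ℝ) r ⊆ Metric.ball 0 ρ :=
    Metric.ball_subset_ball (min_le_right _ _)
  have key : ‖g ε - g 0‖ ≤ C * |ε| * ‖ε - 0‖ := by
    refine Convex.norm_image_sub_le_of_norm_deriv_le
      (fun t ht => hdiffg t (hballs (hsub ht)))
      (fun t ht => ?_) (convex_uIcc 0 ε) (Set.left_mem_uIcc) (Set.right_mem_uIcc)
    have hbt : dist t (0:ℝ) < r₀ := lt_of_lt_of_le (Metric.mem_ball.1 (hsub ht)) (min_le_left _ _)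
    have := hr hbt
    have habs : |t| ≤ |ε| := by
      rw [Set.mem_uIcc] at ht
      rcases ht with ⟨h1', h2'⟩ | ⟨h1', h2'⟩
      · rw [abs_of_nonneg h1']; exact h2'.trans (le_abs_self ε)
      · rw [abs_of_nonpos h2']
        have := neg_abs_le ε
        linarith
    calc ‖deriv g t‖ ≤ C * ‖t‖ := this
      _ ≤ C * |ε| := by
          rw [Real.norm_eq_abs]
          exact mul_le_mul_of_nonneg_left habs hCpos.le
  rw [h0, sub_zero] at key
  calc ‖g ε‖ ≤ C * |ε| * ‖ε - 0‖ := key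
    _ = C * ‖ε ^ 2‖ := by
        rw [sub_zero, Real.norm_eq_abs, Real.norm_eq_abs, abs_pow]
        ring

open Asymptotics Filter in
/-- the inverted Lagrangian leapfrog integrator has at least first-order
accuracy (second-order local error): `‖Ψ_ε(q_0, v_0) − (q_ε, v_ε)‖ = O(ε²)` as `ε → 0`. -/
theorem invertedLagrangianLeapfrog_first_order
    (m : ℕ) (hm : 1 ≤ m)
    (G : (Fin m → ℝ) → Matrix (Fin m) (Fin m) ℝ)
    (hGsmooth : ∀ i j, ContDiff ℝ (⊤ : ℕ∞) fun q => G q i j)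
    (hGpd : ∀ q, (G q).PosDef)
    (U : (Fin m → ℝ) → ℝ) (hU : ContDiff ℝ (⊤ : ℕ∞) U)
    (q v : ℝ → (Fin m → ℝ)) (δ : ℝ) (hδ : 0 < δ)
    (hsol : ContDiffOn ℝ (⊤ : ℕ∞) (fun t => (q t, v t)) (Set.Ioo (-δ) δ))
    (hq : ∀ t ∈ Set.Ioo (-δ) δ, HasDerivAt q (v t) t)
    (hv : ∀ t ∈ Set.Ioo (-δ) δ, ∀ k : Fin m,
      HasDerivAt (fun s => v s k)
        (-(∑ i, ∑ j, christoffel m G k i j (q t) * v t i * v t j)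
          - ∑ l, (G (q t))⁻¹ k l * fderiv ℝ U (q t) (Pi.single l 1)) t) :
    (fun ε : ℝ => invertedLagrangianLeapfrog m G U ε (q 0, v 0) - (q ε, v ε))
      =O[nhds 0] fun ε : ℝ => ε ^ 2 := by
  classical
  have h0mem : (0:ℝ) ∈ Set.Ioo (-δ) δ := ⟨by linarith, hδ⟩
  set q0 : Fin m → ℝ := q 0 with hq0def
  set v0 : Fin m → ℝ := v 0 with hv0def
  set qb : ℝ → Fin m → ℝ := fun ε => q0 + (ε / 2) • v0 with hqbdef
  set A : ℝ → Matrix (Fin m) (Fin m) ℝ :=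
    fun ε => (1 : Matrix (Fin m) (Fin m) ℝ) + 2 • Omega m G ε (qb ε) v0 with hAdef
  set b : ℝ → Fin m → ℝ := fun ε => v0 - ε • ((G (qb ε))⁻¹ *ᵥ gradU m U (qb ε)) with hbdef
  set w : ℝ → Fin m → ℝ := fun ε => (A ε)⁻¹ *ᵥ b ε with hwdef
  have hstep : ∀ ε : ℝ, invertedLagrangianLeapfrog m G U ε (q 0, v 0)
      = (qb ε + (ε / 2) • w ε, w ε) := fun ε => rfl
  -- smoothness of the pieces
  have hqb : ContDiff ℝ (⊤ : ℕ∞) qb :=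
    contDiff_const.add ((contDiff_id.div_const 2).smul contDiff_const)
  have hchr : ∀ k i j : Fin m, ContDiffAt ℝ (⊤ : ℕ∞) (fun ε => christoffel m G k i j (qb ε)) 0 :=
    fun k i j => (contDiffAt_christoffel' hGsmooth hGpd k i j (qb 0)).comp 0 hqb.contDiffAt
  have hGinv : ∀ k l : Fin m, ContDiffAt ℝ (⊤ : ℕ∞) (fun ε => (G (qb ε))⁻¹ k l) 0 :=
    fun k l => (contDiffAt_matrix_inv_entry' (fun a b => (hGsmooth a b).contDiffAt)
      ((hGpd (qb 0)).det_pos.ne') k l).comp 0 hqb.contDiffAt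
  have hgrad : ∀ l : Fin m, ContDiffAt ℝ (⊤ : ℕ∞) (fun ε => gradU m U (qb ε) l) 0 := fun l =>
    ((((hU.fderiv_right (by simp)).clm_apply contDiff_const).contDiffAt).comp 0 hqb.contDiffAt :)
  have hM : ∀ i j : Fin m,
      ContDiffAt ℝ (⊤ : ℕ∞) (fun ε => ∑ k, christoffel m G i k j (qb ε) * v0 k) 0 :=
    fun i j => ContDiffAt.sum fun k _ => (hchr i k j).mul contDiffAt_const
  have hA : ∀ i j : Fin m, ContDiffAt ℝ (⊤ : ℕ∞) (fun ε => A ε i j) 0 := by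
    intro i j
    have h : (fun ε => A ε i j) = fun ε => (1 : Matrix (Fin m) (Fin m) ℝ) i j
        + 2 * ((ε / 2) * ∑ k, christoffel m G i k j (qb ε) * v0 k) := by
      funext ε
      simp [hAdef, Omega, Matrix.add_apply, Matrix.smul_apply, Matrix.of_apply, nsmul_eq_mul]
    rw [h]
    exact contDiffAt_const.add (contDiffAt_const.mul
      ((contDiffAt_id.div_const 2).mul (hM i j)))
  have hA0 : A 0 = 1 := by
    ext i j
    simp [hAdef, Omega, Matrix.add_apply, Matrix.smul_apply, Matrix.of_apply]
  have hdetA0 : (A 0).det ≠ 0 := by rw [hA0, Matrix.det_one]; exact one_ne_zero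
  have hAinv : ∀ k l : Fin m, ContDiffAt ℝ (⊤ : ℕ∞) (fun ε => (A ε)⁻¹ k l) 0 :=
    fun k l => contDiffAt_matrix_inv_entry' hA hdetA0 k l
  have hbl : ∀ l : Fin m, ContDiffAt ℝ (⊤ : ℕ∞) (fun ε => b ε l) 0 := by
    intro l
    have h : (fun ε => b ε l)
        = fun ε => v0 l - ε * ∑ l', (G (qb ε))⁻¹ l l' * gradU m U (qb ε) l' := by
      funext ε
      simp [hbdef, Matrix.mulVec, dotProduct, Pi.sub_apply, Pi.smul_apply, smul_eq_mul]
    rw [h]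
    exact contDiffAt_const.sub
      (contDiffAt_id.mul (ContDiffAt.sum fun l' _ => (hGinv l l').mul (hgrad l')))
  have hwk : ∀ k : Fin m, ContDiffAt ℝ (⊤ : ℕ∞) (fun ε => w ε k) 0 := by
    intro k
    have h : (fun ε => w ε k) = fun ε => ∑ l, (A ε)⁻¹ k l * b ε l := by
      funext ε
      simp [hwdef, Matrix.mulVec, dotProduct]
    rw [h]
    exact ContDiffAt.sum fun l _ => (hAinv k l).mul (hbl l)
  have hw : ContDiffAt ℝ (⊤ : ℕ∞) w 0 := contDiffAt_pi.2 hwk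
  -- values at 0
  have hqb0 : qb 0 = q0 := by simp [hqbdef]
  have hb0 : b 0 = v0 := by simp [hbdef]
  have hw0 : w 0 = v0 := by
    have hone : (1 : Matrix (Fin m) (Fin m) ℝ)⁻¹ = 1 :=
      Matrix.inv_eq_left_inv (by rw [Matrix.one_mul])
    show (A 0)⁻¹ *ᵥ b 0 = v0
    rw [hA0, hone, hb0, Matrix.one_mulVec]
  -- the remainder function r
  set r : ℝ → Fin m → ℝ := fun ε =>
    -((G (qb ε))⁻¹ *ᵥ gradU m U (qb ε))
      - (Matrix.of fun i j => ∑ k, christoffel m G i k j (qb ε) * v0 k) *ᵥ w ε with hrdef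
  have hrk : ∀ k : Fin m, ContDiffAt ℝ (⊤ : ℕ∞) (fun ε => r ε k) 0 := by
    intro k
    have h : (fun ε => r ε k) = fun ε =>
        -(∑ l, (G (qb ε))⁻¹ k l * gradU m U (qb ε) l)
          - ∑ j, (∑ k', christoffel m G k k' j (qb ε) * v0 k') * w ε j := by
      funext ε
      simp [hrdef, Matrix.mulVec, dotProduct, Matrix.of_apply]
    rw [h]
    exact ((ContDiffAt.sum fun l _ => (hGinv k l).mul (hgrad l)).neg).sub
      (ContDiffAt.sum fun j _ => (hM k j).mul (hwk j))
  have hr : ContDiffAt ℝ (⊤ : ℕ∞) r 0 := contDiffAt_pi.2 hrk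
  -- eventual identity  w ε = v0 + ε • r ε
  have hdetc : ContinuousAt (fun ε => (A ε).det) 0 := (contDiffAt_matrix_det' hA).continuousAt
  have hev : ∀ᶠ ε in nhds (0:ℝ), (A ε).det ≠ 0 :=
    hdetc.eventually_ne (by rw [hA0, Matrix.det_one]; exact one_ne_zero)
  have heq : ∀ᶠ ε in nhds (0:ℝ), w ε = v0 + ε • r ε := by
    filter_upwards [hev] with ε hdet
    have hAw : A ε *ᵥ w ε = b ε := by
      rw [hwdef]
      simp only [Matrix.mulVec_mulVec]
      rw [Matrix.mul_nonsing_inv _ (isUnit_iff_ne_zero.2 hdet), Matrix.one_mulVec]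
    have hsplit : w ε + (2 • Omega m G ε (qb ε) v0) *ᵥ w ε = b ε := by
      rw [← hAw, hAdef]
      rw [Matrix.add_mulVec, Matrix.one_mulVec]
    have homega : (2 • Omega m G ε (qb ε) v0) *ᵥ w ε
        = ε • ((Matrix.of fun i j => ∑ k, christoffel m G i k j (qb ε) * v0 k) *ᵥ w ε) := by
      funext k
      show ∑ j, (2 • Omega m G ε (qb ε) v0) k j * w ε j
          = ε * ∑ j, (Matrix.of fun i j => ∑ k, christoffel m G i k j (qb ε) * v0 k) k j * w ε j
      rw [Finset.mul_sum]
      refine Finset.sum_congr rfl fun j _ => ?_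
      simp only [Matrix.smul_apply, Omega, Matrix.of_apply, nsmul_eq_mul]
      ring
    have hweq : w ε = b ε - ε • ((Matrix.of fun i j =>
        ∑ k, christoffel m G i k j (qb ε) * v0 k) *ᵥ w ε) := by
      rw [← homega]
      exact eq_sub_of_add_eq hsplit
    rw [hweq, hbdef, hrdef]
    simp only [smul_sub, smul_neg]
    abel
  -- derivative of w at 0
  have hrd : HasDerivAt r (deriv r 0) 0 := (hr.differentiableAt (by simp)).hasDerivAt
  have haux : HasDerivAt (fun ε : ℝ => v0 + ε • r ε) (r 0) 0 := by
    have h := (hasDerivAt_const (0:ℝ) v0).add ((hasDerivAt_id (0:ℝ)).smul hrd)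
    simpa [Pi.add_def, Pi.smul_def'] using h
  have hwhd : HasDerivAt w (r 0) 0 := haux.congr_of_eventuallyEq heq
  -- value of r at 0
  set a0 : Fin m → ℝ := fun k =>
    -(∑ i, ∑ j, christoffel m G k i j q0 * v0 i * v0 j)
      - ∑ l, (G q0)⁻¹ k l * fderiv ℝ U q0 (Pi.single l 1) with ha0def
  have hr0 : r 0 = a0 := by
    funext k
    have h1 : r 0 k = -(∑ l, (G q0)⁻¹ k l * fderiv ℝ U q0 (Pi.single l 1))
        - ∑ j, (∑ i, christoffel m G k i j q0 * v0 i) * v0 j := by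
      simp [hrdef, hqb0, hw0, Matrix.mulVec, dotProduct, Matrix.of_apply, gradU]
    have hsum : ∑ j, (∑ i, christoffel m G k i j q0 * v0 i) * v0 j
        = ∑ i, ∑ j, christoffel m G k i j q0 * v0 i * v0 j := by
      calc ∑ j, (∑ i, christoffel m G k i j q0 * v0 i) * v0 j
          = ∑ j, ∑ i, christoffel m G k i j q0 * v0 i * v0 j :=
            Finset.sum_congr rfl fun j _ => Finset.sum_mul _ _ _
        _ = ∑ i, ∑ j, christoffel m G k i j q0 * v0 i * v0 j := Finset.sum_comm
    rw [h1, hsum, ha0def]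
    ring
  -- derivative of the first component
  have hhalf : HasDerivAt (fun ε : ℝ => ε / 2) ((1:ℝ) / 2) 0 := by
    simpa using (hasDerivAt_id (0:ℝ)).div_const 2
  have hqbd : HasDerivAt qb (((1:ℝ) / 2) • v0) 0 := by
    have h := (hasDerivAt_const (0:ℝ) q0).add (hhalf.smul_const v0)
    simpa [Pi.add_def, hqbdef] using h
  have h2 : HasDerivAt (fun ε : ℝ => (ε / 2) • w ε) (((1:ℝ) / 2) • v0) 0 := by
    have h := hhalf.smul hwhd
    simpa [hw0, Pi.smul_def'] using h
  have hqt : HasDerivAt (fun ε : ℝ => qb ε + (ε / 2) • w ε) v0 0 := by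
    have h := hqbd.add h2
    have hv0' : ((1:ℝ) / 2) • v0 + ((1:ℝ) / 2) • v0 = v0 := by
      rw [← add_smul]; norm_num
    rwa [hv0'] at h
  -- derivative of the true solution
  have hvd : HasDerivAt v a0 0 := hasDerivAt_pi.2 fun k => hv 0 h0mem k
  have hqd : HasDerivAt q v0 0 := hq 0 h0mem
  have hsold : HasDerivAt (fun t => (q t, v t)) (v0, a0) 0 := hqd.prodMk hvd
  -- the difference function
  have hPhid : HasDerivAt (fun ε : ℝ => (qb ε + (ε / 2) • w ε, w ε)) (v0, a0) 0 :=
    hqt.prodMk (hr0 ▸ hwhd)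
  have hfd : HasDerivAt (fun ε : ℝ => (qb ε + (ε / 2) • w ε, w ε) - (q ε, v ε)) 0 0 := by
    have h := hPhid.sub hsold
    simpa [Pi.sub_def] using h
  have hsol0 : ContDiffAt ℝ (⊤ : ℕ∞) (fun t : ℝ => (q t, v t)) 0 :=
    hsol.contDiffAt (Ioo_mem_nhds (by linarith) hδ)
  have hfC : ContDiffAt ℝ (⊤ : ℕ∞) (fun ε : ℝ => (qb ε + (ε / 2) • w ε, w ε) - (q ε, v ε)) 0 :=
    ((hqb.contDiffAt.add ((contDiffAt_id.div_const 2).smul hw)).prodMk hw).sub hsol0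
  have hf0 : (fun ε : ℝ => (qb ε + (ε / 2) • w ε, w ε) - (q ε, v ε)) 0 = 0 := by
    show (qb 0 + ((0:ℝ) / 2) • w 0, w 0) - (q 0, v 0) = 0
    rw [hqb0, hw0, ← hq0def, ← hv0def]
    simp
  have hgoal : (fun ε : ℝ => invertedLagrangianLeapfrog m G U ε (q 0, v 0) - (q ε, v ε))
      = fun ε : ℝ => (qb ε + (ε / 2) • w ε, w ε) - (q ε, v ε) :=
    funext fun ε => by rw [hstep ε]
  rw [hgoal]
  exact isBigO_sq_of_contDiffAt hfC hf0 hfd.deriv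
end
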